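/- Every spherical convex body of constant width smaller than π/2 on S^d (d ≥ 2) is strictly convex. -/

import Mathlib

open scoped RealInnerProductSpace
open Real

noncomputable section

/-- Points of the ambient Euclidean space `E^n`. -/
abbrev Pt (n : ℕ) := EuclideanSpace ℝ (Fin n)

/-- The unit sphere in `E^n`. -/
def uSphere (n : ℕ) : Set (Pt n) := {x | ‖x‖ = 1}

/-- Spherical (geodesic) distance between unit vectors. -/
def sdist {n : ℕ} (x y : Pt n) : ℝ := Real.arccos ⟪x, y⟫

/-- `z` lies on the shorter great-circle arc connecting `x` and `y`. -/
def OnArc {n : ℕ} (x z y : Pt n) : Prop := sdist x z + sdist z y = sdist x y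

/-- Spherical convexity: no pair of antipodes, and closed under shorter arcs. -/
def SphConvex {n : ℕ} (C : Set (Pt n)) : Prop :=
  C ⊆ uSphere n ∧ (∀ x ∈ C, -x ∉ C) ∧
    ∀ x ∈ C, ∀ y ∈ C, ∀ z ∈ uSphere n, OnArc x z y → z ∈ C

/-- Interior of a set relative to the unit sphere. -/
def sphInterior {n : ℕ} (C : Set (Pt n)) : Set (Pt n) :=
  {x | x ∈ C ∧ ∃ ε > 0, ∀ y ∈ uSphere n, sdist x y < ε → y ∈ C}

/-- Boundary of a closed subset of the sphere. -/
def sphBoundary {n : ℕ} (C : Set (Pt n)) : Set (Pt n) := C \ sphInterior C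

/-- A spherical convex body: closed, spherically convex, nonempty interior. -/
def SphConvexBody {n : ℕ} (C : Set (Pt n)) : Prop :=
  IsClosed C ∧ SphConvex C ∧ (sphInterior C).Nonempty

/-- Closed spherical ball of radius `ρ` centered at `c`. -/
def sBall {n : ℕ} (c : Pt n) (ρ : ℝ) : Set (Pt n) := {x | x ∈ uSphere n ∧ sdist c x ≤ ρ}

/-- Hemisphere with center `m`. -/
def Hemi {n : ℕ} (m : Pt n) : Set (Pt n) := sBall m (π/2)

/-- `Hemi m` supports the body `C`. -/
def Supports {n : ℕ} (m : Pt n) (C : Set (Pt n)) : Prop :=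
  ‖m‖ = 1 ∧ C ⊆ Hemi m ∧ ∃ p ∈ C, sdist m p = π/2

/-- `Hemi m` supports the body `C` at the point `p`. -/
def SupportsAt {n : ℕ} (m : Pt n) (C : Set (Pt n)) (p : Pt n) : Prop :=
  ‖m‖ = 1 ∧ C ⊆ Hemi m ∧ p ∈ C ∧ sdist m p = π/2

/-- The lune `Hemi g ∩ Hemi h`. -/
def Lune {n : ℕ} (g h : Pt n) : Set (Pt n) := Hemi g ∩ Hemi h

/-- `g, h` determine a genuine lune. -/
def IsLune {n : ℕ} (g h : Pt n) : Prop := ‖g‖ = 1 ∧ ‖h‖ = 1 ∧ g ≠ h ∧ g ≠ -h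

/-- Center of the `(d-1)`-dimensional hemisphere `G/H` bounding the lune
`Hemi g ∩ Hemi h` and contained in `Hemi g` (i.e. on the great sphere `bd (Hemi g)`). -/
def cGH {n : ℕ} (g h : Pt n) : Pt n :=
  (‖h - ⟪g, h⟫ • g‖)⁻¹ • (h - ⟪g, h⟫ • g)

/-- Thickness of the lune `Hemi g ∩ Hemi h`: distance of the centers of the two
bounding `(d-1)`-dimensional hemispheres. -/
def luneThickness {n : ℕ} (g h : Pt n) : ℝ := sdist (cGH g h) (cGH h g)

/-- Width of `C` determined by the supporting hemisphere `Hemi k`. -/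
def widthAt {n : ℕ} (k : Pt n) (C : Set (Pt n)) : ℝ :=
  sInf {t | ∃ k', Supports k' C ∧ t = luneThickness k k'}

/-- Thickness (minimal width) of a spherical convex body. -/
def thickness {n : ℕ} (C : Set (Pt n)) : ℝ :=
  sInf {t | ∃ k, Supports k C ∧ t = widthAt k C}

/-- A reduced spherical convex body. -/
def Reduced {n : ℕ} (R : Set (Pt n)) : Prop :=
  SphConvexBody R ∧
    ∀ C : Set (Pt n), SphConvexBody C → C ⊆ R → C ≠ R → thickness C < thickness R

/-- A spherical convex body of constant width `w`. -/
def ConstWidth {n : ℕ} (W : Set (Pt n)) (w : ℝ) : Prop :=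
  SphConvexBody W ∧ ∀ k, Supports k W → widthAt k W = w

/-- Smoothness: a unique supporting hemisphere at every boundary point. -/
def SphSmooth {n : ℕ} (C : Set (Pt n)) : Prop :=
  ∀ p ∈ sphBoundary C, ∃! m, SupportsAt m C p

/-- Strict convexity: the boundary contains no nondegenerate arc. -/
def StrictlyConvexBody {n : ℕ} (C : Set (Pt n)) : Prop :=
  ∀ x ∈ sphBoundary C, ∀ y ∈ sphBoundary C, x ≠ y →
    ∃ z ∈ uSphere n, OnArc x z y ∧ z ∉ sphBoundary C

/-- Spherical diameter of a set. -/
def sdiam {n : ℕ} (C : Set (Pt n)) : ℝ := sSup {t | ∃ x ∈ C, ∃ y ∈ C, t = sdist x y}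

/-- Spherical convex hull: smallest spherically convex set containing `A`. -/
def sphConvHull {n : ℕ} (A : Set (Pt n)) : Set (Pt n) := ⋂₀ {C | SphConvex C ∧ A ⊆ C}

/-- `e` is an extreme point of the convex body `C`. -/
def ExtremePt {n : ℕ} (C : Set (Pt n)) (e : Pt n) : Prop := e ∈ C ∧ SphConvex (C \ {e})

/-- `Q` is a quarter of a disk of radius `r`: intersection of a ball `sBall c r` with
two hemispheres whose bounding great circles pass through `c` and are orthogonal at `c`. -/
def IsQuarterDisk {n : ℕ} (Q : Set (Pt n)) (r : ℝ) : Prop :=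
  ∃ c g h : Pt n, ‖c‖ = 1 ∧ ‖g‖ = 1 ∧ ‖h‖ = 1 ∧ ⟪g, c⟫ = 0 ∧ ⟪h, c⟫ = 0 ∧
    ⟪g, h⟫ = 0 ∧ Q = sBall c r ∩ Hemi g ∩ Hemi h

/-- A spherical polygon: a convex body whose boundary is a finite union of arcs. -/
def IsPolygon {n : ℕ} (V : Set (Pt n)) : Prop :=
  SphConvexBody V ∧ ∃ F : Finset (Pt n × Pt n),
    sphBoundary V = ⋃ p ∈ F, {z | z ∈ uSphere n ∧ OnArc p.1 z p.2}

/-- A body of constant diameter `w`. -/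
def ConstDiameter {n : ℕ} (W : Set (Pt n)) (w : ℝ) : Prop :=
  SphConvexBody W ∧ sdiam W = w ∧ ∀ p ∈ sphBoundary W, ∃ p' ∈ W, sdist p p' = w


/-!
If the boundary of `W` contained the arc between `x ≠ y`, a hemisphere `Hemi m` supporting `W`
at the midpoint of the arc would carry `x` and `y` on its bounding great sphere. Constant width
`w < π/2` bounds the diameter of `W` by `w`, and the narrowest lune `Hemi m ∩ Hemi k` containing
`W` has thickness `w`, with the centre of its face on `bd (Hemi k)` lying in `W`. The only point
of the face on `bd (Hemi m)` within distance `w` of that centre is the centre of this face, so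
`x = y`.
-/

open InnerProductGeometry
open scoped NNReal

variable {n : ℕ}

section Arcs

theorem sdist_eq_angle {x y : Pt n} (hx : ‖x‖ = 1) (hy : ‖y‖ = 1) : sdist x y = angle x y := by
  simp [sdist, angle, hx, hy]

theorem sdist_comm (x y : Pt n) : sdist x y = sdist y x := by
  rw [sdist, sdist, real_inner_comm]

theorem cos_sdist {x y : Pt n} (hx : ‖x‖ = 1) (hy : ‖y‖ = 1) : cos (sdist x y) = ⟪x, y⟫ :=
  cos_arccos (neg_one_le_real_inner_of_norm_eq_one hx hy) (real_inner_le_one_of_norm_eq_one hx hy)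

theorem cos_le_inner_of_sdist_le {x y : Pt n} (hx : ‖x‖ = 1) (hy : ‖y‖ = 1) {r : ℝ} (hr : r ≤ π)
    (h : sdist x y ≤ r) : cos r ≤ ⟪x, y⟫ :=
  cos_sdist hx hy ▸ cos_le_cos_of_nonneg_of_le_pi (arccos_nonneg _) hr h

theorem eq_of_sdist_eq_zero {x y : Pt n} (hx : ‖x‖ = 1) (hy : ‖y‖ = 1) (h : sdist x y = 0) :
    x = y :=
  (inner_eq_one_iff_of_norm_eq_one hx hy).mp
    (le_antisymm (real_inner_le_one_of_norm_eq_one hx hy) (arccos_eq_zero.mp h))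

theorem sdist_triangle {x y z : Pt n} (hx : ‖x‖ = 1) (hy : ‖y‖ = 1) (hz : ‖z‖ = 1) :
    sdist x z ≤ sdist x y + sdist y z := by
  simpa only [sdist_eq_angle, hx, hy, hz] using angle_le_angle_add_angle x y z

theorem norm_sub_le_sdist {x y : Pt n} (hx : ‖x‖ = 1) (hy : ‖y‖ = 1) : ‖x - y‖ ≤ sdist x y := by
  refine (pow_le_pow_iff_left₀ (norm_nonneg _) (arccos_nonneg _) two_ne_zero).mp ?_
  have h := one_sub_sq_div_two_le_cos (x := sdist x y)
  rw [cos_sdist hx hy, sdist] at h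
  rw [norm_sub_sq_real, hx, hy]
  linarith

theorem onArc_smul_add_smul {x y : Pt n} (hx : ‖x‖ = 1) (hy : ‖y‖ = 1) {a b : ℝ} (ha : 0 ≤ a)
    (hb : 0 ≤ b) (hz : ‖a • x + b • y‖ = 1) : OnArc x (a • x + b • y) y := by
  have hspan : a • x + b • y ∈ Submodule.span ℝ≥0 {x, y} :=
    Submodule.mem_span_pair.mpr ⟨⟨a, ha⟩, ⟨b, hb⟩, rfl⟩
  rw [OnArc, sdist_eq_angle hx hz, sdist_eq_angle hz hy, sdist_eq_angle hx hy]
  exact (angle_eq_angle_add_add_angle_add_of_mem_span (by rintro h; simp [h] at hz) hspan).symm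

end Arcs

section Projection

theorem sq_inner_le_one {x y : Pt n} (hx : ‖x‖ = 1) (hy : ‖y‖ = 1) : ⟪x, y⟫ ^ 2 ≤ 1 := by
  rw [sq_le_one_iff_abs_le_one]
  simpa [hx, hy] using abs_real_inner_le_norm x y

theorem norm_sub_inner_smul {g h : Pt n} (hg : ‖g‖ = 1) (hh : ‖h‖ = 1) :
    ‖h - ⟪g, h⟫ • g‖ = √(1 - ⟪g, h⟫ ^ 2) := by
  rw [← sqrt_sq (norm_nonneg _), norm_sub_sq_real, hh, norm_smul, hg, real_inner_smul_right,
    real_inner_comm g h, Real.norm_eq_abs, mul_one, sq_abs]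
  ring_nf

theorem cGH_eq {g h : Pt n} (hg : ‖g‖ = 1) (hh : ‖h‖ = 1) :
    cGH g h = (√(1 - ⟪g, h⟫ ^ 2))⁻¹ • (h - ⟪g, h⟫ • g) := by
  rw [cGH, norm_sub_inner_smul hg hh]

theorem cGH_eq_smul_add_smul {g h : Pt n} (hg : ‖g‖ = 1) (hh : ‖h‖ = 1) :
    cGH g h = (√(1 - ⟪g, h⟫ ^ 2))⁻¹ • h + (-⟪g, h⟫ * (√(1 - ⟪g, h⟫ ^ 2))⁻¹) • g := by
  rw [cGH_eq hg hh, smul_sub, smul_smul, sub_eq_add_neg, ← neg_smul, mul_comm, neg_mul]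

theorem inner_cGH {g h : Pt n} (hg : ‖g‖ = 1) (hh : ‖h‖ = 1) (x : Pt n) :
    ⟪x, cGH g h⟫ = (⟪x, h⟫ - ⟪g, h⟫ * ⟪x, g⟫) / √(1 - ⟪g, h⟫ ^ 2) := by
  rw [cGH_eq hg hh, real_inner_smul_right, inner_sub_right, real_inner_smul_right, inv_mul_eq_div]

theorem norm_cGH {g h : Pt n} (hg : ‖g‖ = 1) (hh : ‖h‖ = 1) (hgh : ⟪g, h⟫ ^ 2 < 1) :
    ‖cGH g h‖ = 1 := by
  rw [cGH, norm_smul, norm_inv, norm_norm, inv_mul_cancel₀]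
  rw [norm_sub_inner_smul hg hh]
  exact (sqrt_pos.mpr (by linarith)).ne'

theorem sdist_cGH_eq_pi_div_two_sub {x y : Pt n} (hx : ‖x‖ = 1) (hy : ‖y‖ = 1)
    (hxy : ⟪x, y⟫ ^ 2 < 1) (hc : 0 ≤ ⟪x, y⟫) : sdist (cGH y x) x = π / 2 - sdist x y := by
  have hs : 0 < √(1 - ⟪x, y⟫ ^ 2) := sqrt_pos.mpr (by linarith)
  have hsin : ⟪cGH y x, x⟫ = sin (sdist x y) := by
    rw [real_inner_comm, inner_cGH hy hx, real_inner_self_eq_norm_sq, hx, real_inner_comm x y,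
      sdist, sin_arccos, div_eq_iff hs.ne', mul_self_sqrt (by linarith)]
    ring
  have hxy0 : 0 ≤ sdist x y := arccos_nonneg _
  have hxy' : sdist x y ≤ π / 2 := arccos_le_pi_div_two.mpr hc
  rw [sdist, hsin, ← cos_pi_div_two_sub, arccos_cos (by linarith) (by linarith)]

theorem luneThickness_eq_arccos {g h : Pt n} (hg : ‖g‖ = 1) (hh : ‖h‖ = 1)
    (hgh : ⟪g, h⟫ ^ 2 < 1) : luneThickness g h = arccos (-⟪g, h⟫) := by
  have hs : 0 < √(1 - ⟪g, h⟫ ^ 2) := sqrt_pos.mpr (by linarith)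
  have hcg : ⟪cGH g h, g⟫ = 0 := by
    rw [real_inner_comm, inner_cGH hg hh, real_inner_self_eq_norm_sq, hg]
    ring
  have hch : ⟪cGH g h, h⟫ = √(1 - ⟪g, h⟫ ^ 2) := by
    rw [real_inner_comm, inner_cGH hg hh, real_inner_self_eq_norm_sq, hh, real_inner_comm g h,
      div_eq_iff hs.ne', mul_self_sqrt (by linarith)]
    ring
  rw [luneThickness, sdist, inner_cGH hh hg, real_inner_comm g h, hcg, hch]
  congr 1
  field_simp
  ring

theorem luneThickness_of_sq_eq_one {g h : Pt n} (hg : ‖g‖ = 1) (hh : ‖h‖ = 1)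
    (hgh : ⟪g, h⟫ ^ 2 = 1) : luneThickness g h = π / 2 := by
  rw [luneThickness, sdist, cGH_eq hg hh, cGH_eq hh hg, real_inner_comm g h, hgh]
  simp

theorem inner_neg_of_luneThickness_lt {g h : Pt n} (hg : ‖g‖ = 1) (hh : ‖h‖ = 1)
    (hlt : luneThickness g h < π / 2) : ⟪g, h⟫ < 0 := by
  rcases (sq_inner_le_one hg hh).lt_or_eq with hgh | hgh
  · rw [luneThickness_eq_arccos hg hh hgh, arccos_lt_pi_div_two] at hlt
    linarith
  · exact absurd (luneThickness_of_sq_eq_one hg hh hgh) hlt.ne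

/-- The derivative of `t ↦ ⟪m, k + t • u⟫ + c * ‖k + t • u‖` at `0` is `⟪m + c • k, u⟫`. -/
theorem exists_inner_add_mul_norm_lt {m k u : Pt n} (hk : ‖k‖ = 1) (hu : ‖u‖ = 1) {c : ℝ}
    (hc : 0 < c) (h : ⟪m + c • k, u⟫ < 0) :
    ∃ t : ℝ, 0 < t ∧ ⟪m, k + t • u⟫ + c * ‖k + t • u‖ < ⟪m, k⟫ + c := by
  set t := -⟪m + c • k, u⟫ / c
  have ht : 0 < t := div_pos (neg_pos.mpr h) hc
  refine ⟨t, ht, ?_⟩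
  have hnorm : ‖k + t • u‖ ≤ 1 + t * ⟪k, u⟫ + t ^ 2 / 2 := by
    have h2 : ‖k + t • u‖ ^ 2 = 1 + 2 * t * ⟪k, u⟫ + t ^ 2 := by
      rw [norm_add_sq_real, hk, norm_smul, hu, real_inner_smul_right, Real.norm_eq_abs, mul_one,
        sq_abs]
      ring
    nlinarith [sq_nonneg (‖k + t • u‖ - 1)]
  have hct : c * t = -⟪m + c • k, u⟫ := mul_div_cancel₀ _ hc.ne'
  rw [inner_add_left, real_inner_smul_left] at hct
  have hslope : t * (⟪m, u⟫ + c * ⟪k, u⟫) = -(c * t) * t := by rw [hct]; ring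
  rw [inner_add_right, real_inner_smul_right]
  nlinarith [mul_le_mul_of_nonneg_left hnorm hc.le, mul_pos hc (mul_pos ht ht)]

/-- The only point of the face of the lune `Hemi m ∩ Hemi k` on `bd (Hemi m)` whose distance to
the centre `cGH k m` of the opposite face is at most the thickness of the lune is `cGH m k`. -/
theorem eq_cGH_of_neg_inner_le_inner_cGH {m k u : Pt n} (hm : ‖m‖ = 1) (hk : ‖k‖ = 1)
    (hu : ‖u‖ = 1) (hsq : ⟪m, k⟫ ^ 2 < 1) (hneg : ⟪m, k⟫ < 0) (hmu : ⟪m, u⟫ = 0)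
    (h : -⟪m, k⟫ ≤ ⟪u, cGH k m⟫) : u = cGH m k := by
  have hs : 0 < √(1 - ⟪m, k⟫ ^ 2) := sqrt_pos.mpr (by linarith)
  have hum : ⟪u, m⟫ = 0 := by rw [real_inner_comm]; exact hmu
  rw [inner_cGH hk hm, real_inner_comm m k, hum, le_div_iff₀ hs] at h
  have h1 : 1 ≤ ⟪u, cGH m k⟫ := by
    rw [inner_cGH hm hk, hum, mul_zero, sub_zero, le_div_iff₀ hs, one_mul]
    nlinarith
  exact (inner_eq_one_iff_of_norm_eq_one hu (norm_cGH hm hk hsq)).mp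
    (le_antisymm (real_inner_le_one_of_norm_eq_one hu (norm_cGH hm hk hsq)) h1)

end Projection

section Bodies

variable {W : Set (Pt n)}

theorem SphConvex.smul_add_smul_mem (hW : SphConvex W) {x y : Pt n} (hx : x ∈ W) (hy : y ∈ W)
    {a b : ℝ} (ha : 0 ≤ a) (hb : 0 ≤ b) (hz : ‖a • x + b • y‖ = 1) : a • x + b • y ∈ W :=
  hW.2.2 x hx y hy _ hz (onArc_smul_add_smul (hW.1 hx) (hW.1 hy) ha hb hz)

/-- First-order optimality of `p₀` along the arc from `p₀` to `p`. -/
theorem SphConvex.mul_inner_le_inner_of_isMinOn (hW : SphConvex W) {x p₀ p : Pt n}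
    (hx : ‖x‖ = 1) (hp₀ : p₀ ∈ W) (hmin : IsMinOn (⟪x, ·⟫) W p₀) (hp : p ∈ W) :
    ⟪x, p₀⟫ * ⟪p₀, p⟫ ≤ ⟪x, p⟫ := by
  have hp₀1 : ‖p₀‖ = 1 := hW.1 hp₀
  have hp1 : ‖p‖ = 1 := hW.1 hp
  set c := ⟪x, p₀⟫
  set c₀ := ⟪p₀, p⟫
  set D := ⟪x, p⟫ - c * c₀
  have hc : -1 ≤ c := neg_one_le_real_inner_of_norm_eq_one hx hp₀1
  have hc₀ : c₀ ≤ 1 := real_inner_le_one_of_norm_eq_one hp₀1 hp1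
  have key : ∀ ε, 0 < ε → ε ≤ 1 → -(ε ^ 2 / 2) ≤ ε * D := by
    intro ε hε hε1
    set z := (1 - ε * c₀) • p₀ + ε • p
    have hz2 : ‖z‖ ^ 2 = 1 + ε ^ 2 * (1 - c₀ ^ 2) := by
      rw [norm_add_sq_real, norm_smul, norm_smul, hp₀1, hp1, real_inner_smul_left,
        real_inner_smul_right, Real.norm_eq_abs, Real.norm_eq_abs, mul_one, mul_one, sq_abs,
        sq_abs]
      ring
    have hz1 : 1 ≤ ‖z‖ := by nlinarith [norm_nonneg z, sq_inner_le_one hp₀1 hp1]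
    have hzW : ‖z‖⁻¹ • z ∈ W := by
      have h := hW.smul_add_smul_mem hp₀ hp
        (mul_nonneg (inv_nonneg.mpr (norm_nonneg z)) (by nlinarith : 0 ≤ 1 - ε * c₀))
        (mul_nonneg (inv_nonneg.mpr (norm_nonneg z)) hε.le)
      simp only [mul_smul, ← smul_add] at h
      exact h (by rw [norm_smul, norm_inv, norm_norm, inv_mul_cancel₀ (by positivity)])
    have hxz : ⟪x, z⟫ = c + ε * D := by
      simp only [z, D, inner_add_right, real_inner_smul_right]
      ring
    have hminz : c * ‖z‖ ≤ ⟪x, z⟫ := by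
      have h : c ≤ ‖z‖⁻¹ * ⟪x, z⟫ := real_inner_smul_right x z _ ▸ hmin hzW
      rwa [le_inv_mul_iff₀ (by positivity), mul_comm] at h
    nlinarith [mul_le_mul_of_nonneg_right hc (sub_nonneg.mpr hz1), sq_nonneg (‖z‖ - 1),
      sq_inner_le_one hp₀1 hp1]
  by_contra! hD
  have hDneg : D < 0 := by linarith
  have := key (min 1 (-D)) (lt_min one_pos (by linarith)) (min_le_left _ _)
  nlinarith [min_le_right 1 (-D), lt_min one_pos (neg_pos.mpr hDneg)]

theorem SphConvex.inner_cGH_nonneg_of_isMinOn (hW : SphConvex W) {x p₀ : Pt n} (hx : ‖x‖ = 1)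
    (hp₀ : p₀ ∈ W) (hmin : IsMinOn (⟪x, ·⟫) W p₀) {p : Pt n} (hp : p ∈ W) :
    0 ≤ ⟪cGH p₀ x, p⟫ := by
  rw [real_inner_comm, inner_cGH (hW.1 hp₀) hx, real_inner_comm x p, real_inner_comm p₀ p,
    real_inner_comm x p₀]
  exact div_nonneg (by linarith [hW.mul_inner_le_inner_of_isMinOn hx hp₀ hmin hp])
    (sqrt_nonneg _)

theorem SphConvex.exists_separating (hW : SphConvex W) (hWc : IsCompact W) {q : Pt n}
    (hq : ‖q‖ = 1) (hqW : q ∉ W) : ∃ u : Pt n, ‖u‖ = 1 ∧ (∀ p ∈ W, 0 ≤ ⟪u, p⟫) ∧ ⟪u, q⟫ < 0 := by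
  by_cases hanti : ∀ p ∈ W, ⟪q, p⟫ = -1
  · refine ⟨-q, by rw [norm_neg, hq], fun p hp => ?_, ?_⟩
    · rw [inner_neg_left, hanti p hp, neg_neg]
      exact zero_le_one
    · rw [inner_neg_left, real_inner_self_eq_norm_sq, hq]
      norm_num
  push Not at hanti
  obtain ⟨p₁, hp₁, hqp₁⟩ := hanti
  have hnq : ‖-q‖ = 1 := by rw [norm_neg, hq]
  obtain ⟨p₀, hp₀, hmin⟩ :=
    hWc.exists_isMinOn ⟨p₁, hp₁⟩ (by fun_prop : Continuous fun p : Pt n => ⟪-q, p⟫).continuousOn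
  have hp₀1 : ‖p₀‖ = 1 := hW.1 hp₀
  have hlow : -1 < ⟪q, p₀⟫ := by
    have := hmin hp₁
    simp only [Set.mem_ofPred_eq, inner_neg_left, neg_le_neg_iff] at this
    exact ((neg_one_le_real_inner_of_norm_eq_one hq (hW.1 hp₁)).lt_of_ne' hqp₁).trans_le this
  have hup : ⟪q, p₀⟫ < 1 :=
    (inner_lt_one_iff_real_of_norm_eq_one hq hp₀1).mpr fun h => hqW (h ▸ hp₀)
  have hneg : ⟪p₀, -q⟫ = -⟪q, p₀⟫ := by rw [inner_neg_right, real_inner_comm]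
  have hsq : ⟪p₀, -q⟫ ^ 2 < 1 := by
    rw [hneg]
    nlinarith
  refine ⟨cGH p₀ (-q), norm_cGH hp₀1 hnq hsq,
    fun p hp => hW.inner_cGH_nonneg_of_isMinOn hnq hp₀ hmin hp, ?_⟩
  rw [real_inner_comm, inner_cGH hp₀1 hnq, hneg, inner_neg_right, real_inner_self_eq_norm_sq, hq]
  exact div_neg_of_neg_of_pos (by nlinarith) (sqrt_pos.mpr (by nlinarith))

theorem SphConvexBody.subset_uSphere (hW : SphConvexBody W) : W ⊆ uSphere n :=
  hW.2.1.1

theorem SphConvexBody.sphConvex (hW : SphConvexBody W) : SphConvex W :=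
  hW.2.1

theorem SphConvexBody.norm_eq_one (hW : SphConvexBody W) {p : Pt n} (hp : p ∈ W) : ‖p‖ = 1 :=
  hW.subset_uSphere hp

theorem SphConvexBody.isCompact (hW : SphConvexBody W) : IsCompact W :=
  (isCompact_sphere (0 : Pt n) 1).of_isClosed_subset hW.1 fun p hp => by
    simpa using hW.norm_eq_one hp

theorem SphConvexBody.neg_one_lt_inner (hW : SphConvexBody W) {x y : Pt n} (hx : x ∈ W)
    (hy : y ∈ W) : -1 < ⟪x, y⟫ := by
  refine (neg_one_le_real_inner_of_norm_eq_one (hW.norm_eq_one hx) (hW.norm_eq_one hy)).lt_of_ne ?_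
  intro h
  rw [eq_comm, inner_eq_neg_one_iff_of_norm_eq_one (hW.norm_eq_one hx) (hW.norm_eq_one hy)] at h
  exact hW.2.1.2.1 y hy (h ▸ hx)

theorem mem_Hemi_iff {m x : Pt n} : x ∈ Hemi m ↔ ‖x‖ = 1 ∧ 0 ≤ ⟪m, x⟫ := by
  simp only [Hemi, sBall, uSphere, sdist, Set.mem_ofPred_eq, arccos_le_pi_div_two]

theorem supports_iff (hW : W ⊆ uSphere n) {k : Pt n} :
    Supports k W ↔ ‖k‖ = 1 ∧ (∀ p ∈ W, 0 ≤ ⟪k, p⟫) ∧ ∃ p ∈ W, ⟪k, p⟫ = 0 := by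
  simp only [Supports, Set.subset_def, mem_Hemi_iff, sdist, arccos_eq_pi_div_two]
  exact and_congr_right fun _ => and_congr_left fun _ =>
    forall₂_congr fun p hp => and_iff_right (hW hp)

theorem Supports.exists_inner_pos {m : Pt n} (hm : Supports m W) (hW : SphConvexBody W) :
    ∃ ξ ∈ W, 0 < ⟪m, ξ⟫ := by
  obtain ⟨hm1, hnn, -⟩ := (supports_iff hW.subset_uSphere).mp hm
  obtain ⟨ξ, hξW, ε, hε, hball⟩ := hW.2.2
  refine ⟨ξ, hξW, (hnn ξ hξW).lt_of_ne fun hmξ => ?_⟩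
  have hξ := hW.norm_eq_one hξW
  have hξm : ⟪ξ, m⟫ = 0 := by rw [real_inner_comm]; exact hmξ.symm
  set t := min (ε / 2) (π / 2)
  have ht0 : 0 < t := by positivity
  have htπ : t < π := (min_le_right _ _).trans_lt (by linarith [pi_pos])
  set y := cos t • ξ - sin t • m
  have hξy : ⟪ξ, y⟫ = cos t := by
    simp [y, inner_sub_right, real_inner_smul_right, hξm, hξ]
  have hy : ‖y‖ = 1 := by
    have h2 : ‖y‖ ^ 2 = 1 := by
      rw [norm_sub_sq_real, norm_smul, norm_smul, hξ, hm1, real_inner_smul_left,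
        real_inner_smul_right, hξm, Real.norm_eq_abs, Real.norm_eq_abs, mul_one, mul_one, sq_abs,
        sq_abs]
      linear_combination sin_sq_add_cos_sq t
    exact (pow_eq_one_iff_of_nonneg (norm_nonneg _) two_ne_zero).mp h2
  have hyW : y ∈ W := hball y hy <| by
    rw [sdist, hξy, arccos_cos ht0.le htπ.le]
    exact (min_le_left _ _).trans_lt (half_lt_self hε)
  have hmy : ⟪m, y⟫ = -sin t := by
    simp [y, inner_sub_right, real_inner_smul_right, ← hmξ, hm1]
  linarith [hnn y hyW, sin_pos_of_pos_of_lt_pi ht0 htπ]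

theorem Supports.neg_one_lt_inner {m k : Pt n} (hm : Supports m W) (hk : Supports k W)
    (hW : SphConvexBody W) : -1 < ⟪m, k⟫ := by
  refine (neg_one_le_real_inner_of_norm_eq_one hm.1 hk.1).lt_of_ne fun h => ?_
  rw [eq_comm, inner_eq_neg_one_iff_of_norm_eq_one hm.1 hk.1] at h
  obtain ⟨ξ, hξW, hmξ⟩ := hm.exists_inner_pos hW
  rw [h, inner_neg_left] at hmξ
  linarith [((supports_iff hW.subset_uSphere).mp hk).2.1 ξ hξW]

theorem SphConvexBody.exists_supports_of_mem_sphBoundary (hW : SphConvexBody W) {z : Pt n}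
    (hz : z ∈ sphBoundary W) : ∃ m, Supports m W ∧ ⟪m, z⟫ = 0 := by
  obtain ⟨hzW, hzint⟩ := hz
  have hz1 := hW.norm_eq_one hzW
  have hout : ∀ ε > 0, ∃ u : Pt n, (‖u‖ = 1 ∧ ∀ p ∈ W, 0 ≤ ⟪u, p⟫) ∧ ⟪u, z⟫ < ε := by
    intro ε hε
    obtain ⟨q, hq, hzq, hqW⟩ : ∃ q ∈ uSphere n, sdist z q < ε ∧ q ∉ W := by
      by_contra! h
      exact hzint ⟨hzW, ε, hε, h⟩
    obtain ⟨u, hu, hnn, huq⟩ := hW.sphConvex.exists_separating hW.isCompact hq hqW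
    refine ⟨u, ⟨hu, hnn⟩, ?_⟩
    calc ⟪u, z⟫ = ⟪u, q⟫ + ⟪u, z - q⟫ := by rw [inner_sub_right]; ring
      _ < ‖z - q‖ := by linarith [real_inner_le_norm u (z - q), hu ▸ one_mul ‖z - q‖]
      _ ≤ sdist z q := norm_sub_le_sdist hz1 hq
      _ < ε := hzq
  set A := {u : Pt n | ‖u‖ = 1 ∧ ∀ p ∈ W, 0 ≤ ⟪u, p⟫}
  have hA : IsCompact A := by
    refine (isCompact_sphere (0 : Pt n) 1).of_isClosed_subset ?_ fun u hu => by simpa using hu.1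
    simp only [A, Set.ofPred_and, Set.ofPred_forall]
    exact (isClosed_eq continuous_norm continuous_const).inter <| isClosed_iInter fun p =>
      isClosed_iInter fun _ => isClosed_le continuous_const (continuous_id.inner continuous_const)
  obtain ⟨u₁, hu₁, -⟩ := hout 1 one_pos
  obtain ⟨m, hm, hmin⟩ :=
    hA.exists_isMinOn ⟨u₁, hu₁⟩ (by fun_prop : Continuous fun u : Pt n => ⟪u, z⟫).continuousOn
  have hmz : ⟪m, z⟫ = 0 := by
    refine le_antisymm ?_ (hm.2 z hzW)
    by_contra! hpos
    obtain ⟨u, hu, huz⟩ := hout _ hpos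
    exact (hmin hu).not_gt huz
  exact ⟨m, (supports_iff hW.subset_uSphere).mpr ⟨hm.1, hm.2, z, hzW, hmz⟩, hmz⟩

end Bodies

section Width

variable {W : Set (Pt n)}

def minInner (W : Set (Pt n)) (k : Pt n) : ℝ := sInf ((⟪k, ·⟫) '' W)

theorem continuous_minInner (hW : IsCompact W) : Continuous (minInner W) :=
  hW.continuous_sInf continuous_inner

theorem minInner_le (hW : IsCompact W) {k p : Pt n} (hp : p ∈ W) : minInner W k ≤ ⟪k, p⟫ :=
  csInf_le (hW.bddBelow_image (by fun_prop : Continuous fun p : Pt n => ⟪k, p⟫).continuousOn)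
    ⟨p, hp, rfl⟩

theorem minInner_eq_zero_iff (hW : IsCompact W) (hne : W.Nonempty) {k : Pt n} :
    minInner W k = 0 ↔ (∀ p ∈ W, 0 ≤ ⟪k, p⟫) ∧ ∃ p ∈ W, ⟪k, p⟫ = 0 := by
  obtain ⟨p₀, hp₀, hmin⟩ :=
    (hW.image (by fun_prop : Continuous fun p : Pt n => ⟪k, p⟫)).sInf_mem (hne.image _)
  change ⟪k, p₀⟫ = minInner W k at hmin
  constructor
  · intro h
    exact ⟨fun p hp => h ▸ minInner_le hW hp, p₀, hp₀, hmin.trans h⟩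
  · rintro ⟨hnn, p, hp, hkp⟩
    exact le_antisymm (hkp ▸ minInner_le hW hp) (hmin ▸ hnn p₀ hp₀)

theorem isCompact_setOf_supports (hW : SphConvexBody W) : IsCompact {k : Pt n | Supports k W} := by
  obtain ⟨ξ, hξ, -⟩ := hW.2.2
  have hset : {k : Pt n | Supports k W} = Metric.sphere 0 1 ∩ minInner W ⁻¹' {0} := by
    ext k
    simp only [Set.mem_ofPred_eq, supports_iff hW.subset_uSphere, Set.mem_inter_iff,
      mem_sphere_zero_iff_norm, Set.mem_preimage, Set.mem_singleton_iff,
      minInner_eq_zero_iff hW.isCompact ⟨ξ, hξ⟩]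
  rw [hset]
  exact (isCompact_sphere 0 1).inter_right
    (isClosed_singleton.preimage (continuous_minInner hW.isCompact))

theorem widthAt_nonneg {m : Pt n} (hm : Supports m W) : 0 ≤ widthAt m W :=
  le_csInf ⟨_, m, hm, rfl⟩ fun _ ⟨_, _, ht⟩ => ht ▸ arccos_nonneg _

theorem SphConvexBody.exists_isMinOn_inner_of_widthAt_lt (hW : SphConvexBody W) {m : Pt n}
    (hm : Supports m W) (hw : widthAt m W < π / 2) :
    ∃ k, Supports k W ∧ IsMinOn (⟪m, ·⟫) {k | Supports k W} k ∧ ⟪m, k⟫ = -cos (widthAt m W) := by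
  obtain ⟨k, hk, hmin⟩ := (isCompact_setOf_supports hW).exists_isMinOn ⟨m, hm⟩
    (by fun_prop : Continuous fun k : Pt n => ⟪m, k⟫).continuousOn
  refine ⟨k, hk, hmin, ?_⟩
  have hne : {t | ∃ k', Supports k' W ∧ t = luneThickness m k'}.Nonempty := ⟨_, m, hm, rfl⟩
  obtain ⟨_, ⟨k₁, hk₁, rfl⟩, hk₁lt⟩ := exists_lt_of_csInf_lt hne hw
  have hneg : ⟪m, k⟫ < 0 := (hmin hk₁).trans_lt (inner_neg_of_luneThickness_lt hm.1 hk₁.1 hk₁lt)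
  have hsq : ⟪m, k⟫ ^ 2 < 1 := by nlinarith [hm.neg_one_lt_inner hk hW]
  have hwidth : widthAt m W = arccos (-⟪m, k⟫) := by
    rw [← luneThickness_eq_arccos hm.1 hk.1 hsq]
    refine le_antisymm (csInf_le ⟨0, fun _ ⟨_, _, ht⟩ => ht ▸ arccos_nonneg _⟩ ⟨k, hk, rfl⟩)
      (le_csInf hne ?_)
    rintro _ ⟨k', hk', rfl⟩
    rw [luneThickness_eq_arccos hm.1 hk.1 hsq]
    rcases (sq_inner_le_one hm.1 hk'.1).lt_or_eq with hlt | heq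
    · rw [luneThickness_eq_arccos hm.1 hk'.1 hlt]
      exact antitone_arccos (neg_le_neg (hmin hk'))
    · rw [luneThickness_of_sq_eq_one hm.1 hk'.1 heq]
      exact (arccos_lt_pi_div_two.mpr (by linarith)).le
  rw [hwidth, cos_arccos (by linarith) (by nlinarith), neg_neg]

theorem SphConvexBody.exists_minInner_sub_smul_eq_zero (hW : SphConvexBody W) {m k : Pt n}
    (hξ : ∃ ξ ∈ W, 0 < ⟪m, ξ⟫) (hk : ∀ p ∈ W, 0 ≤ ⟪k, p⟫) :
    ∃ s : ℝ, 0 ≤ s ∧ minInner W (k - s • m) = 0 := by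
  obtain ⟨ξ, hξW, hmξ⟩ := hξ
  have hf : Continuous fun s : ℝ => minInner W (k - s • m) :=
    (continuous_minInner hW.isCompact).comp (by fun_prop)
  set s₁ := (⟪k, ξ⟫ + 1) / ⟪m, ξ⟫
  have hs₁ : 0 ≤ s₁ := div_nonneg (by linarith [hk ξ hξW]) hmξ.le
  have hf0 : 0 ≤ minInner W (k - (0 : ℝ) • m) := by
    rw [zero_smul, sub_zero]
    exact le_csInf (Set.Nonempty.image _ ⟨ξ, hξW⟩) fun _ ⟨p, hp, hkp⟩ => hkp ▸ hk p hp
  have hf1 : minInner W (k - s₁ • m) ≤ 0 := by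
    refine (minInner_le hW.isCompact hξW).trans ?_
    rw [inner_sub_left, real_inner_smul_left, div_mul_cancel₀ _ hmξ.ne']
    linarith
  obtain ⟨s₀, ⟨hs₀, -⟩, hfs₀⟩ := intermediate_value_Icc' hs₁ hf.continuousOn ⟨hf1, hf0⟩
  exact ⟨s₀, hs₀, hfs₀⟩

/-- Pushing a hemisphere containing `W` away from `m` until it touches `W` does not decrease the
angle between its centre and `m`. -/
theorem SphConvexBody.exists_supports_inner_le_inner_div_norm (hW : SphConvexBody W)
    {m k : Pt n} (hm : ‖m‖ = 1) (hξ : ∃ ξ ∈ W, 0 < ⟪m, ξ⟫) (hk : ∀ p ∈ W, 0 ≤ ⟪k, p⟫)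
    (hk0 : k ≠ 0) (hmk : ⟪m, k⟫ ≤ 0) : ∃ k', Supports k' W ∧ ⟪m, k'⟫ ≤ ⟪m, k⟫ / ‖k‖ := by
  obtain ⟨s, hs, hmin⟩ := hW.exists_minInner_sub_smul_eq_zero hξ hk
  have hne : W.Nonempty := hξ.imp fun _ => And.left
  obtain ⟨hlnn, p₀, hp₀, hlp₀⟩ := (minInner_eq_zero_iff hW.isCompact hne).mp hmin
  set l := k - s • m
  have hml : ⟪m, l⟫ = ⟪m, k⟫ - s := by
    rw [inner_sub_right, real_inner_smul_right, real_inner_self_eq_norm_sq, hm]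
    ring
  have hl0 : l ≠ 0 := by
    intro h
    rw [h, inner_zero_right] at hml
    have hs0 : s = 0 := by linarith
    exact hk0 (by simpa [l, hs0] using h)
  have hlpos : 0 < ‖l‖ := norm_pos_iff.mpr hl0
  have hkpos : 0 < ‖k‖ := norm_pos_iff.mpr hk0
  have hlk : ‖l‖ ≤ ‖k‖ + s := by
    refine (norm_sub_le _ _).trans ?_
    rw [norm_smul, hm, Real.norm_eq_abs, abs_of_nonneg hs, mul_one]
  have hmk' : -‖k‖ ≤ ⟪m, k⟫ := by
    simpa [hm] using neg_le_of_abs_le (abs_real_inner_le_norm m k)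
  refine ⟨‖l‖⁻¹ • l, (supports_iff hW.subset_uSphere).mpr ⟨?_, fun p hp => ?_, p₀, hp₀, ?_⟩, ?_⟩
  · rw [norm_smul, norm_inv, norm_norm, inv_mul_cancel₀ hlpos.ne']
  · rw [real_inner_smul_left]
    exact mul_nonneg (inv_nonneg.mpr hlpos.le) (hlnn p hp)
  · rw [real_inner_smul_left, hlp₀, mul_zero]
  · rw [real_inner_smul_right, hml, inv_mul_eq_div, div_le_div_iff₀ hlpos hkpos]
    nlinarith [mul_le_mul_of_nonpos_left hlk hmk]

/-- If `cGH k m ∉ W`, rotating `k` slightly towards a hemisphere separating `cGH k m` from `W`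
gives a supporting hemisphere `Hemi k'` with `⟪m, k'⟫ < ⟪m, k⟫`. -/
theorem SphConvexBody.cGH_mem_of_isMinOn (hW : SphConvexBody W) {m k : Pt n} (hm : Supports m W)
    (hk : Supports k W) (hmin : IsMinOn (⟪m, ·⟫) {k | Supports k W} k) (hneg : ⟪m, k⟫ < 0) :
    cGH k m ∈ W := by
  have hm1 := hm.1
  have hk1 := hk.1
  have hsq : ⟪m, k⟫ ^ 2 < 1 := by nlinarith [hm.neg_one_lt_inner hk hW]
  have hs : 0 < √(1 - ⟪m, k⟫ ^ 2) := sqrt_pos.mpr (by linarith)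
  by_contra hcW
  obtain ⟨u, hu, hunn, huc⟩ :=
    hW.sphConvex.exists_separating hW.isCompact (norm_cGH hk1 hm1 (real_inner_comm m k ▸ hsq)) hcW
  have hdir : ⟪m + (-⟪m, k⟫) • k, u⟫ < 0 := by
    rw [inner_cGH hk1 hm1, real_inner_comm m k, div_lt_iff₀ hs, zero_mul] at huc
    rw [inner_add_left, real_inner_smul_left, real_inner_comm u m, real_inner_comm u k]
    linarith
  obtain ⟨t, ht, hlt⟩ := exists_inner_add_mul_norm_lt hk1 hu (neg_pos.mpr hneg) hdir
  set k₂ := k + t • u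
  have hk₂nn : ∀ p ∈ W, 0 ≤ ⟪k₂, p⟫ := fun p hp => by
    rw [inner_add_left, real_inner_smul_left]
    nlinarith [((supports_iff hW.subset_uSphere).mp hk).2.1 p hp, hunn p hp]
  have hk₂0 : k₂ ≠ 0 := fun h => by simp [h] at hlt
  have hk₂pos : 0 < ‖k₂‖ := norm_pos_iff.mpr hk₂0
  obtain ⟨k₃, hk₃, hmk₃⟩ := hW.exists_supports_inner_le_inner_div_norm hm1
    (hm.exists_inner_pos hW) hk₂nn hk₂0 (by nlinarith)
  have hlt₂ : ⟪m, k₂⟫ / ‖k₂‖ < ⟪m, k⟫ := (div_lt_iff₀ hk₂pos).mpr (by linarith)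
  have hmin₃ : ⟪m, k⟫ ≤ ⟪m, k₃⟫ := hmin hk₃
  linarith

end Width

section ConstantWidth

variable {W : Set (Pt n)} {w : ℝ}

theorem ConstWidth.sdist_le (hW : ConstWidth W w) (hw0 : 0 ≤ w) (hw : w < π / 2) {p q : Pt n}
    (hp : p ∈ W) (hq : q ∈ W) : sdist p q ≤ w := by
  obtain ⟨hB, hwidth⟩ := hW
  obtain ⟨⟨x, y⟩, ⟨hx, hy⟩, hmin⟩ := (hB.isCompact.prod hB.isCompact).exists_isMinOn
    ⟨(p, q), hp, hq⟩ (by fun_prop : Continuous fun z : Pt n × Pt n => ⟪z.1, z.2⟫).continuousOn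
  have hxy : ∀ {p q : Pt n}, p ∈ W → q ∈ W → ⟪x, y⟫ ≤ ⟪p, q⟫ := fun hp hq =>
    hmin (Set.mk_mem_prod hp hq)
  refine (antitone_arccos (hxy hp hq)).trans ?_
  change sdist x y ≤ w
  have hx1 := hB.norm_eq_one hx
  have hy1 := hB.norm_eq_one hy
  rcases eq_or_ne x y with rfl | hne
  · rwa [sdist, real_inner_self_eq_norm_sq, hx1, one_pow, arccos_one]
  have hsq : ⟪x, y⟫ ^ 2 < 1 := by
    nlinarith [hB.neg_one_lt_inner hx hy, (inner_lt_one_iff_real_of_norm_eq_one hx1 hy1).mpr hne]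
  have hsq' : ⟪y, x⟫ ^ 2 < 1 := real_inner_comm x y ▸ hsq
  have hm : Supports (cGH y x) W := by
    refine (supports_iff hB.subset_uSphere).mpr ⟨norm_cGH hy1 hx1 hsq', fun p hp =>
      hB.sphConvex.inner_cGH_nonneg_of_isMinOn hx1 hy (fun p hp => hxy hx hp) hp, y, hy, ?_⟩
    rw [real_inner_comm, inner_cGH hy1 hx1, real_inner_self_eq_norm_sq, hy1]
    ring
  obtain ⟨k, hk, -, hmk⟩ := hB.exists_isMinOn_inner_of_widthAt_lt hm ((hwidth _ hm).symm ▸ hw)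
  rw [hwidth _ hm] at hmk
  have hmk' : sdist (cGH y x) k = π - w := by
    rw [sdist, hmk, arccos_neg, arccos_cos hw0 (by linarith [pi_pos])]
  rcases le_or_gt 0 ⟪x, y⟫ with hc | hc
  · linarith [sdist_triangle hm.1 hx1 hk.1, sdist_cGH_eq_pi_div_two_sub hx1 hy1 hsq hc,
      sdist_comm x k, (hk.2.1 hx).2]
  · have hmW : cGH y x ∈ W := by
      have hm1 := hm.1
      rw [cGH_eq_smul_add_smul hy1 hx1] at hm1 ⊢
      have hs : 0 ≤ (√(1 - ⟪y, x⟫ ^ 2))⁻¹ := inv_nonneg.mpr (sqrt_nonneg _)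
      exact hB.sphConvex.smul_add_smul_mem hx hy hs
        (mul_nonneg (by linarith [real_inner_comm x y]) hs) hm1
    linarith [sdist_comm (cGH y x) k, (hk.2.1 hmW).2]

theorem ConstWidth.subsingleton_setOf_inner_eq_zero (hW : ConstWidth W w) (hw : w < π / 2)
    {m : Pt n} (hm : Supports m W) : {u ∈ W | ⟪m, u⟫ = 0}.Subsingleton := by
  have hB := hW.1
  have hwm : widthAt m W = w := hW.2 m hm
  have hdiam : ∀ {p q : Pt n}, p ∈ W → q ∈ W → sdist p q ≤ w :=
    hW.sdist_le (hwm ▸ widthAt_nonneg hm) hw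
  rintro u ⟨hu, hmu⟩ v ⟨hv, hmv⟩
  rcases (arccos_nonneg ⟪u, v⟫).eq_or_lt with h | hpos
  · exact eq_of_sdist_eq_zero (hB.norm_eq_one hu) (hB.norm_eq_one hv) h.symm
  have hw0 : 0 < w := hpos.trans_le (hdiam hu hv)
  obtain ⟨k, hk, hmin, hmk⟩ := hB.exists_isMinOn_inner_of_widthAt_lt hm (hwm.symm ▸ hw)
  rw [hwm] at hmk
  have hneg : ⟪m, k⟫ < 0 := by
    rw [hmk, neg_neg_iff_pos]
    exact cos_pos_of_mem_Ioo ⟨by linarith, hw⟩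
  have hsq : ⟪m, k⟫ ^ 2 < 1 := by nlinarith [hm.neg_one_lt_inner hk hB]
  have hc : cGH k m ∈ W := hB.cGH_mem_of_isMinOn hm hk hmin hneg
  have key : ∀ x ∈ W, ⟪m, x⟫ = 0 → x = cGH m k := fun x hx hmx =>
    eq_cGH_of_neg_inner_le_inner_cGH hm.1 hk.1 (hB.norm_eq_one hx) hsq hneg hmx <| by
      rw [hmk, neg_neg]
      exact cos_le_inner_of_sdist_le (hB.norm_eq_one hx) (hB.norm_eq_one hc) (by linarith)
        (hdiam hx hc)
  exact (key u hu hmu).trans (key v hv hmv).symm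

end ConstantWidth

theorem constWidth_lt_pi_div_two_strictlyConvex_general (d : ℕ)
    (W : Set (Pt (d+1))) (w : ℝ) (hW : ConstWidth W w) (hw : w < π/2) :
    StrictlyConvexBody W := by
  intro x hx y hy hne
  by_contra! hbd
  have hB := hW.1
  have hxy0 : x + y ≠ 0 := fun h => by
    have := hB.neg_one_lt_inner hx.1 hy.1
    rw [eq_neg_of_add_eq_zero_left h, inner_neg_left, real_inner_self_eq_norm_sq,
      hB.norm_eq_one hy.1] at this
    norm_num at this
  set r := ‖x + y‖⁻¹
  have hr : 0 < r := inv_pos.mpr (norm_pos_iff.mpr hxy0)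
  have hz1 : ‖r • x + r • y‖ = 1 := by
    rw [← smul_add, norm_smul, norm_inv, norm_norm, inv_mul_cancel₀ (norm_pos_iff.mpr hxy0).ne']
  have hmid := onArc_smul_add_smul (hB.norm_eq_one hx.1) (hB.norm_eq_one hy.1) hr.le hr.le hz1
  obtain ⟨m, hm, hmz⟩ := hB.exists_supports_of_mem_sphBoundary (hbd _ hz1 hmid)
  obtain ⟨-, hmnn, -⟩ := (supports_iff hB.subset_uSphere).mp hm
  rw [inner_add_right, real_inner_smul_right, real_inner_smul_right] at hmz
  have hmx := hmnn x hx.1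
  have hmy := hmnn y hy.1
  have hsum : ⟪m, x⟫ + ⟪m, y⟫ = 0 := by nlinarith
  exact hne (hW.subsingleton_setOf_inner_eq_zero hw hm ⟨hx.1, by linarith⟩ ⟨hy.1, by linarith⟩)

theorem constWidth_lt_pi_div_two_strictlyConvex (d : ℕ) (hd : 2 ≤ d)
    (W : Set (Pt (d+1))) (w : ℝ) (hW : ConstWidth W w) (hw : w < π/2) :
    StrictlyConvexBody W :=
  constWidth_lt_pi_div_two_strictlyConvex_general d W w hW hw
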